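/- Let p be a prime, let I be a set, and let A = ℤ_p^I be the product of I copies of the compact group ℤ_p of p-adic integers, with the product topology. If G is a dense subgroup of A that is sequentially complete and minimal (in its subspace topology), then there exists k ∈ ℕ such that p^k·a ∈ G for every a ∈ A. -/

import Mathlib

/-!
Sequential completeness makes `G` sequentially closed in `A`, hence a `ℤ_p`-submodule, as `ℕ` is
dense in `ℤ_p`. A dense minimal subgroup meets every nontrivial closed subgroup, in particular the
compact subgroup `ℤ_p a` for `a ≠ 0`; writing the coefficient as a unit times `p ^ v` gives
`p ^ v a ∈ G`, so `A / G` is `p`-primary torsion. Finally `A` is the countable union of the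
subgroups `{a | p ^ m a ∈ G}`, which are closed for the complete metric of uniform convergence
on `I`; by Baire one of them contains a uniform ball, hence all of some `p ^ j A`.
-/

open Topology

/-- A Hausdorff topological (additive) group topology `t` is *minimal* if there is no
strictly coarser Hausdorff group topology on the same group: every Hausdorff group
topology `t'` that is coarser than `t` (i.e. every `t'`-open set is `t`-open) equals `t`. -/
def IsMinimalAddGroup (G : Type*) [AddCommGroup G] [t : TopologicalSpace G] : Prop :=
  ∀ t' : TopologicalSpace G, @IsTopologicalAddGroup G t' _ → @T2Space G t' →
    (∀ s : Set G, @IsOpen G t' s → @IsOpen G t s) → t' = t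

/-- A topological abelian group is *sequentially complete* if every Cauchy sequence converges. -/
def IsSequentiallyComplete (G : Type*) [AddCommGroup G] [TopologicalSpace G] : Prop :=
  ∀ u : ℕ → G, (∀ V ∈ 𝓝 (0 : G), ∃ N : ℕ, ∀ m ≥ N, ∀ n ≥ N, u m - u n ∈ V) →
    ∃ x : G, Filter.Tendsto u Filter.atTop (𝓝 x)

open Filter

section TopologicalAddGroup

variable {A : Type*} [AddCommGroup A] [TopologicalSpace A] [IsTopologicalAddGroup A] [T2Space A]

theorem IsSequentiallyComplete.isSeqClosed {G : AddSubgroup A} (hG : IsSequentiallyComplete G) :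
    IsSeqClosed (G : Set A) := by
  intro u x hu hx
  let v : ℕ → G := fun n => ⟨u n, hu n⟩
  have hdiff : Tendsto (fun q : ℕ × ℕ => v q.1 - v q.2) atTop (𝓝 0) := by
    rw [IsInducing.subtypeVal.tendsto_nhds_iff, AddSubgroup.coe_zero, ← sub_self x,
      ← prod_atTop_atTop_eq]
    exact (hx.comp tendsto_fst).sub (hx.comp tendsto_snd)
  obtain ⟨g, hg⟩ := hG v fun V hV => eventually_atTop_prod_self'.mp (hdiff hV)
  rw [tendsto_nhds_unique hx ((continuous_subtype_val.tendsto g).comp hg)]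
  exact g.2

/-- By minimality `G` carries the topology induced by `G → A ⧸ N`; density then puts every `a ∈ N`
in every closed neighbourhood of `0`. -/
theorem IsMinimalAddGroup.eq_bot_of_disjoint {G N : AddSubgroup A} (hd : Dense (G : Set A))
    (hmin : IsMinimalAddGroup G) (hN : IsClosed (N : Set A)) (hGN : Disjoint G N) : N = ⊥ := by
  let f : G →+ A ⧸ N := (QuotientAddGroup.mk' N).comp G.subtype
  have hf : Function.Injective f := by
    rw [injective_iff_map_eq_zero]
    intro g hg
    exact Subtype.ext (AddSubgroup.disjoint_def.mp hGN g.2 ((QuotientAddGroup.eq_zero_iff _).mp hg))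
  have hcont : Continuous f := continuous_quotient_mk'.comp continuous_subtype_val
  have htop : TopologicalSpace.induced f inferInstance = instTopologicalSpaceSubtype :=
    hmin _ (topologicalAddGroup_induced f) (@IsEmbedding.t2Space _ _ (.induced f inferInstance) _ _ _
      (IsEmbedding.induced hf)) fun s ⟨u, hu, hus⟩ => hus ▸ hu.preimage hcont
  have hnhds : 𝓝 (0 : G) = comap f (𝓝 0) := by
    rw [← map_zero f, ← nhds_induced, htop]
  rw [eq_bot_iff]
  intro a ha
  rw [AddSubgroup.mem_bot]
  by_contra ha0
  obtain ⟨U, ⟨hU, hUc⟩, haU⟩ := (closed_nhds_basis (0 : A)).mem_iff.mp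
    (isOpen_compl_singleton.mem_nhds (Ne.symm ha0))
  obtain ⟨V, hV, hVU⟩ : ((↑) ⁻¹' U : Set G) ∈ comap f (𝓝 0) :=
    hnhds ▸ continuous_subtype_val.tendsto (0 : G) hU
  obtain ⟨W, hWV, hWo, hW0⟩ := mem_nhds_iff.mp hV
  have hWa : a ∈ QuotientAddGroup.mk' N ⁻¹' W := by
    simpa [(QuotientAddGroup.eq_zero_iff a).mpr ha] using hW0
  -- by density, `a` lies in the closure of the trace on `G` of the open set `mk ⁻¹' W`
  have hWU : QuotientAddGroup.mk' N ⁻¹' W ∩ G ⊆ U := fun x ⟨hxW, hx⟩ => @hVU ⟨x, hx⟩ (hWV hxW)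
  exact haU (hUc.closure_subset_iff.mpr hWU
    (hd.open_subset_closure_inter (hWo.preimage continuous_quotient_mk') hWa)) rfl

end TopologicalAddGroup

section PadicModule

variable {p : ℕ} [Fact p.Prime] {M : Type*} [AddCommGroup M] [TopologicalSpace M]
  [Module ℤ_[p] M] [ContinuousSMul ℤ_[p] M]

theorem AddSubgroup.smul_mem_of_isSeqClosed {G : AddSubgroup M} (hG : IsSeqClosed (G : Set M))
    (c : ℤ_[p]) {x : M} (hx : x ∈ G) : c • x ∈ G := by
  obtain ⟨u, hu, huc⟩ := mem_closure_iff_seq_limit.mp (PadicInt.denseRange_natCast c)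
  refine hG (fun n => ?_) (huc.smul_const x)
  obtain ⟨k, hk⟩ := hu n
  rw [← hk, Nat.cast_smul_eq_nsmul]
  exact G.nsmul_mem hx k

theorem exists_pow_smul_mem_of_dense_minimal [IsTopologicalAddGroup M] [T2Space M]
    {G : AddSubgroup M} (hd : Dense (G : Set M)) (hmin : IsMinimalAddGroup G)
    (hG : IsSeqClosed (G : Set M)) (a : M) : ∃ m : ℕ, (p : ℤ_[p]) ^ m • a ∈ G := by
  let N := (ℤ_[p] ∙ a).toAddSubgroup
  have hN : IsClosed (N : Set M) := by
    change IsClosed ((ℤ_[p] ∙ a : Submodule ℤ_[p] M) : Set M)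
    rw [Submodule.span_singleton_eq_range]
    exact (isCompact_range (continuous_id.smul continuous_const)).isClosed
  by_cases hGN : Disjoint G N
  · have ha : a ∈ N := Submodule.mem_span_singleton_self a
    rw [hmin.eq_bot_of_disjoint hd hN hGN, AddSubgroup.mem_bot] at ha
    exact ⟨0, by simp [ha]⟩
  obtain ⟨x, hxG, hxN, hx0⟩ : ∃ x ∈ G, x ∈ N ∧ x ≠ 0 := by
    simpa [AddSubgroup.disjoint_def] using hGN
  obtain ⟨c, rfl⟩ := Submodule.mem_span_singleton.mp hxN
  have hc : c ≠ 0 := by rintro rfl; simp at hx0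
  obtain ⟨u, hu⟩ : ∃ u : ℤ_[p]ˣ, c = u * (p : ℤ_[p]) ^ c.valuation :=
    ⟨_, PadicInt.unitCoeff_spec hc⟩
  refine ⟨c.valuation, ?_⟩
  generalize c.valuation = v at hu
  subst hu
  have := G.smul_mem_of_isSeqClosed hG ((u⁻¹ : ℤ_[p]ˣ) : ℤ_[p]) hxG
  rwa [smul_smul, ← mul_assoc, Units.inv_mul, one_mul] at this

end PadicModule

section PadicPower

open UniformConvergence

variable {p : ℕ} [Fact p.Prime] {I : Type*}

/-- Baire category theorem in `I →ᵤ ℤ_[p]`, whose topology is finer than the product topology, so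
that the sets `{a | p ^ m • a ∈ G}` are closed in it. -/
theorem exists_forall_pow_smul_mem_of_forall_exists {G : AddSubgroup (I → ℤ_[p])}
    (hG : IsSeqClosed (G : Set (I → ℤ_[p]))) (htor : ∀ a, ∃ m : ℕ, (p : ℤ_[p]) ^ m • a ∈ G) :
    ∃ k : ℕ, ∀ a, (p : ℤ_[p]) ^ k • a ∈ G := by
  let S : ℕ → AddSubgroup (I → ℤ_[p]) := fun m =>
    G.comap (DistribSMul.toAddMonoidHom _ ((p : ℤ_[p]) ^ m))
  have hS : ∀ m, IsClosed (UniformFun.toFun ⁻¹' (S m : Set (I → ℤ_[p])) : Set (I →ᵤ ℤ_[p])) :=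
    fun m => ((hG.preimage (continuous_const_smul _).seqContinuous).preimage
      UniformFun.uniformContinuous_toFun.continuous.seqContinuous).isClosed
  obtain ⟨m, f, hf⟩ := nonempty_interior_of_iUnion_of_closed hS
    (Set.eq_univ_of_forall fun a => Set.mem_iUnion.mpr (htor a))
  obtain ⟨ε, hε, hεf⟩ := (UniformFun.hasBasis_nhds_of_basis _ _ f
    Metric.uniformity_basis_dist).mem_iff.mp (mem_interior_iff_mem_nhds.mp hf)
  obtain ⟨j, hj⟩ := PadicInt.exists_pow_neg_lt p hε
  refine ⟨m + j, fun b => ?_⟩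
  have hf' : UniformFun.toFun f ∈ S m := interior_subset (s := UniformFun.toFun ⁻¹' _) hf
  have hfb : UniformFun.toFun f + (p : ℤ_[p]) ^ j • b ∈ S m := hεf fun i =>
    calc dist (f i) (f i + (p : ℤ_[p]) ^ j * b i) = ‖(p : ℤ_[p]) ^ j * b i‖ := dist_self_add_right _ _
      _ ≤ ‖(p : ℤ_[p]) ^ j‖ := by
        rw [norm_mul]; exact mul_le_of_le_one_right (norm_nonneg _) (PadicInt.norm_le_one _)
      _ < ε := (PadicInt.norm_p_pow j).trans_lt hj
  have := (S m).sub_mem hfb hf'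
  rw [pow_add, mul_smul]
  simpa [S] using this

end PadicPower

/-- **Key Lemma.** Let `p` be a prime and `A = ℤ_p^I` a power of the compact group of
`p`-adic integers with the product topology. If `G` is a dense subgroup of `A` that is
sequentially complete and minimal in the subspace topology, then `p^k · A ⊆ G` for
some `k ∈ ℕ`. -/
theorem pow_smul_mem_of_dense_seqComplete_minimal (p : ℕ) [Fact p.Prime] (I : Type u)
    (G : AddSubgroup (I → ℤ_[p])) (hd : Dense (G : Set (I → ℤ_[p])))
    (hsc : IsSequentiallyComplete G) (hmin : IsMinimalAddGroup G) :
    ∃ k : ℕ, ∀ a : I → ℤ_[p], ((p : ℤ) ^ k) • a ∈ G := by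
  have hG := hsc.isSeqClosed
  obtain ⟨k, hk⟩ := exists_forall_pow_smul_mem_of_forall_exists hG
    (exists_pow_smul_mem_of_dense_minimal hd hmin hG)
  refine ⟨k, fun a => ?_⟩
  simpa [← Int.cast_smul_eq_zsmul ℤ_[p]] using hk a
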